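/- Let q be a prime, n, d, m ≥ 1, ε ∈ [0,1], and let T ≠ T* be two fixed (n;d)-tensors over 𝔽_q. In the noisy model where M^{(1)},…,M^{(m)} are i.i.d. uniform (n;d)-tensors and ỹ = y_{T*} + z with q-ary symmetric noise z of error probability ε, for every integer τ with 0 ≤ τ ≤ m(q−1)/q one has Pr( d_H(y_T, ỹ) ≤ τ ) ≤ exp( −2·( m(q−1)/q − τ )² / m ), where d_H is Hamming distance on 𝔽_q^m and exp is the natural exponential. -/

import Mathlib

open scoped Classical

/-- An `(n;d)`-tensor over `𝔽_q`: a map `[n]^d → 𝔽_q`. -/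
abbrev Tensor (q n d : ℕ) := (Fin d → Fin n) → ZMod q

/-- The tensor inner product `⟨M, T⟩ = Σ_idx M(idx)·T(idx)`. -/
def tinner {q n d : ℕ} [Fact q.Prime] (M T : Tensor q n d) : ZMod q :=
  ∑ idx : Fin d → Fin n, M idx * T idx

/-- Probability weight of a noise symbol of the `q`-ary symmetric channel with error
probability `ε`. -/
noncomputable def noiseW (q : ℕ) [Fact q.Prime] (ε : ℝ) (z : ZMod q) : ℝ :=
  if z = 0 then 1 - ε else ε / ((q : ℝ) - 1)

/-!
`L M = ⟨M, T - T*⟩` is a nonzero linear form, so it pushes the uniform distribution on tensors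
forward to the uniform distribution on `𝔽_q`; and `y_T` differs from `ỹ` exactly at the `k` with
`L M⁽ᵏ⁾ ≠ z_k`. For every fixed noise vector `z`, `d_H(y_T, ỹ)` is therefore distributed as
`d_H(w, z)` with `w` uniform on `𝔽_q^m`: a sum of `m` independent indicators of mean `(q-1)/q`,
whose lower tail is bounded by Hoeffding's inequality. Averaging over `z` keeps the bound.
-/

open ProbabilityTheory MeasureTheory
open scoped Finset

lemma measureReal_uniformOn_univ {Ω : Type*} [Fintype Ω] [MeasurableSpace Ω]
    [MeasurableSingletonClass Ω] (s : Finset Ω) :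
    (uniformOn (Set.univ : Set Ω)).real s = #s / Fintype.card Ω := by
  simp [measureReal_def, uniformOn_univ, ENNReal.toReal_div]

lemma sum_comp_div_card_eq_of_surjective {G H : Type*} [AddGroup G] [Fintype G] [AddGroup H]
    [Fintype H] (φ : G →+ H) (hφ : Function.Surjective φ) (F : H → ℝ) :
    (∑ g, F (φ g)) / Fintype.card G = (∑ h, F h) / Fintype.card H := by
  classical
  set c := #{g | φ g = 0}
  have hfiber : ∀ h, #{g | φ g = h} = c := fun h =>
    AddMonoidHom.card_fiber_eq_of_mem_range φ (hφ h) (hφ 0)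
  have hsum : ∀ F : H → ℝ, ∑ g, F (φ g) = c * ∑ h, F h := by
    intro F
    rw [Finset.sum_comp, Finset.image_univ_of_surjective hφ, Finset.mul_sum]
    simp [hfiber]
  have hc : (c : ℝ) ≠ 0 := by exact_mod_cast (Finset.card_pos.mpr ⟨0, by simp⟩).ne'
  have hcard : (Fintype.card G : ℝ) = c * Fintype.card H := by simpa using hsum 1
  rw [hsum, hcard, mul_div_mul_left _ _ hc]

lemma dotProduct_left_surjective {K ι : Type*} [Field K] [Fintype ι] [DecidableEq ι] {v : ι → K}
    (hv : v ≠ 0) : Function.Surjective (· ⬝ᵥ v) := by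
  obtain ⟨i, hi⟩ := Function.ne_iff.mp hv
  exact fun a => ⟨Pi.single i (a / v i), by simp [single_dotProduct, div_mul_cancel₀ _ hi]⟩

lemma hammingDist_add_right_eq_sub {ι β : Type*} [Fintype ι] [AddCommGroup β] [DecidableEq β]
    (x y z : ι → β) : hammingDist x (y + z) = hammingDist (x - y) z := by
  simp only [hammingDist_eq_hammingNorm]
  congr 1
  abel

section HammingBall

variable {α : Type*} [Fintype α] [DecidableEq α] [Nonempty α]

lemma integral_uniformOn_univ_indicator_ne [MeasurableSpace α] [MeasurableSingletonClass α]
    (a₀ : α) :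
    ∫ a, (if a ≠ a₀ then (1 : ℝ) else 0) ∂uniformOn (Set.univ : Set α)
      = (Fintype.card α - 1) / Fintype.card α := by
  rw [integral_fintype Integrable.of_finite]
  simp only [smul_eq_mul, mul_ite, mul_one, mul_zero, Finset.sum_ite, Finset.sum_const_zero,
    add_zero]
  simp [← Finset.coe_singleton, measureReal_uniformOn_univ, Finset.filter_ne',
    Nat.cast_sub Fintype.card_pos, div_eq_mul_inv]

lemma hasSubgaussianMGF_uniformOn_univ_sub_indicator_ne [MeasurableSpace α]
    [DiscreteMeasurableSpace α] (a₀ : α) :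
    HasSubgaussianMGF
      (fun a => (Fintype.card α - 1) / Fintype.card α - if a ≠ a₀ then (1 : ℝ) else 0)
      (1 / 4) (uniformOn (Set.univ : Set α)) := by
  set p : ℝ := (Fintype.card α - 1) / Fintype.card α
  have hmem : ∀ a, p - (if a ≠ a₀ then (1 : ℝ) else 0) ∈ Set.Icc (p - 1) p := by
    intro a
    split_ifs <;> simp
  have hmean : ∫ a, p - (if a ≠ a₀ then (1 : ℝ) else 0) ∂uniformOn Set.univ = 0 := by
    rw [integral_sub (integrable_const _) Integrable.of_finite, integral_const,
      integral_uniformOn_univ_indicator_ne]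
    simp [p]
  convert hasSubgaussianMGF_of_mem_Icc_of_integral_eq_zero Measurable.of_discrete.aemeasurable
    (ae_of_all _ hmem) hmean using 1
  norm_num

lemma measureReal_hammingDist_le_le [MeasurableSpace α] [DiscreteMeasurableSpace α]
    {ι : Type*} [Fintype ι] (z : ι → α) {τ : ℝ}
    (hτ : τ ≤ Fintype.card ι * ((Fintype.card α - 1) / Fintype.card α)) :
    (Measure.pi fun _ : ι => uniformOn (Set.univ : Set α)).real
        {w | (hammingDist w z : ℝ) ≤ τ}
      ≤ Real.exp (-2 * (Fintype.card ι * ((Fintype.card α - 1) / Fintype.card α) - τ) ^ 2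
          / Fintype.card ι) := by
  set p : ℝ := (Fintype.card α - 1) / Fintype.card α
  set μ : Measure (ι → α) := Measure.pi fun _ => uniformOn Set.univ
  set Y : ι → α → ℝ := fun i a => p - if a ≠ z i then 1 else 0
  have hsum : ∀ w : ι → α, ∑ i, Y i (w i) = Fintype.card ι * p - hammingDist w z := by
    intro w
    simp only [Y, Finset.sum_sub_distrib, Finset.sum_const, Finset.card_univ, nsmul_eq_mul,
      Finset.sum_boole, hammingDist]
  have hset : {w : ι → α | (hammingDist w z : ℝ) ≤ τ}
      = {w | Fintype.card ι * p - τ ≤ ∑ i, Y i (w i)} := by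
    ext w
    simp only [Set.mem_ofPred_eq, hsum, sub_le_sub_iff_left]
  have hindep : iIndepFun (fun i (w : ι → α) => Y i (w i)) μ :=
    iIndepFun_pi fun _ => Measurable.of_discrete.aemeasurable
  have hsubG : ∀ i, HasSubgaussianMGF (fun w : ι → α => Y i (w i)) (1 / 4) μ := by
    intro i
    refine HasSubgaussianMGF.of_map (X := Y i) (measurable_pi_apply i).aemeasurable ?_
    rw [(measurePreserving_eval (fun _ => uniformOn Set.univ) i).map_eq]
    exact hasSubgaussianMGF_uniformOn_univ_sub_indicator_ne (z i)
  rw [hset]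
  refine (HasSubgaussianMGF.measure_sum_ge_le_of_iIndepFun hindep (s := Finset.univ)
    (fun i _ => hsubG i) (sub_nonneg.mpr hτ)).trans_eq (congrArg Real.exp ?_)
  simp only [Finset.sum_const, Finset.card_univ, nsmul_eq_mul]
  push_cast
  ring

lemma card_hammingDist_le_div_le {ι : Type*} [Fintype ι] (z : ι → α) (τ : ℕ)
    (hτ : (τ : ℝ) ≤ Fintype.card ι * ((Fintype.card α - 1) / Fintype.card α)) :
    (#{w | hammingDist w z ≤ τ} : ℝ) / (Fintype.card α : ℝ) ^ Fintype.card ι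
      ≤ Real.exp (-2 * (Fintype.card ι * ((Fintype.card α - 1) / Fintype.card α) - τ) ^ 2
          / Fintype.card ι) := by
  let : MeasurableSpace α := ⊤
  have hpi : (Measure.pi fun _ : ι => uniformOn (Set.univ : Set α)) = uniformOn Set.univ := by
    rw [← uniformOn_pi, Set.pi_univ]
  convert measureReal_hammingDist_le_le z hτ using 1
  rw [hpi]
  simp only [Nat.cast_le]
  rw [← Finset.coe_filter_univ, measureReal_uniformOn_univ, Fintype.card_fun, Nat.cast_pow]

end HammingBall

section Noise

variable {q : ℕ} [Fact q.Prime] {ε : ℝ}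

lemma noiseW_nonneg (hε0 : 0 ≤ ε) (hε1 : ε ≤ 1) (a : ZMod q) : 0 ≤ noiseW q ε a := by
  have hq : (1 : ℝ) < q := by exact_mod_cast (Fact.out : q.Prime).one_lt
  unfold noiseW
  split_ifs
  · linarith
  · exact div_nonneg hε0 (by linarith)

lemma sum_noiseW : ∑ a : ZMod q, noiseW q ε a = 1 := by
  have hq : (q : ℝ) - 1 ≠ 0 := by
    have : (1 : ℝ) < q := by exact_mod_cast (Fact.out : q.Prime).one_lt
    linarith
  rw [← Finset.add_sum_erase _ _ (Finset.mem_univ 0),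
    Finset.sum_congr rfl fun a ha =>
      show noiseW q ε a = ε / ((q : ℝ) - 1) from if_neg (Finset.ne_of_mem_erase ha)]
  simp [noiseW, Finset.card_erase_of_mem, Nat.cast_sub (Fact.out : q.Prime).one_le]
  field_simp
  ring

lemma sum_prod_noiseW (ι : Type*) [Fintype ι] [DecidableEq ι] :
    ∑ z : ι → ZMod q, ∏ k, noiseW q ε (z k) = 1 := by
  rw [← Fintype.prod_sum fun _ a => noiseW q ε a]
  simp [sum_noiseW]

end Noise

theorem prob_hamming_close_le_general (q n d m : ℕ) [Fact q.Prime]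
    (ε : ℝ) (hε0 : 0 ≤ ε) (hε1 : ε ≤ 1)
    (T Tstar : Tensor q n d) (hT : T ≠ Tstar)
    (τ : ℕ) (hτ : (τ : ℝ) ≤ m * ((q : ℝ) - 1) / q) :
    (∑ M : Fin m → Tensor q n d, ∑ z : Fin m → ZMod q,
        (∏ k, noiseW q ε (z k)) *
          (if hammingDist (fun k => tinner (M k) T)
              (fun k => tinner (M k) Tstar + z k) ≤ τ then 1 else 0)) /
        (Fintype.card (Tensor q n d) : ℝ) ^ m
      ≤ Real.exp (-2 * (m * ((q : ℝ) - 1) / q - τ) ^ 2 / m) := by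
  set E := Real.exp (-2 * (m * ((q : ℝ) - 1) / q - τ) ^ 2 / m)
  let L : Tensor q n d →+ ZMod q :=
    AddMonoidHom.mk' (· ⬝ᵥ (T - Tstar)) fun M N => add_dotProduct M N _
  let Φ := L.compLeft (Fin m)
  have hΦ : Function.Surjective Φ :=
    (dotProduct_left_surjective (sub_ne_zero.mpr hT)).comp_left
  have hdist : ∀ M z, hammingDist (fun k => tinner (M k) T) (fun k => tinner (M k) Tstar + z k)
      = hammingDist (Φ M) z := fun M z =>
    (hammingDist_add_right_eq_sub _ (fun k => tinner (M k) Tstar) z).trans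
      (congrArg (hammingDist · z) (funext fun k => (dotProduct_sub (M k) T Tstar).symm))
  have hball : ∀ z : Fin m → ZMod q,
      (∑ M, if hammingDist (Φ M) z ≤ τ then (1 : ℝ) else 0) /
        (Fintype.card (Tensor q n d) : ℝ) ^ m ≤ E := by
    intro z
    have hcard : (Fintype.card (Tensor q n d) : ℝ) ^ m
        = Fintype.card (Fin m → Tensor q n d) := by simp
    have h := card_hammingDist_le_div_le z τ (by simpa [mul_div_assoc] using hτ)
    simp only [Fintype.card_fin, ZMod.card, ← mul_div_assoc] at h
    rw [hcard, sum_comp_div_card_eq_of_surjective Φ hΦ fun w => if hammingDist w z ≤ τ then 1 else 0,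
      Finset.sum_boole, Fintype.card_fun, Nat.cast_pow]
    convert h using 2
    · congr! -- the filters differ only in their decidability instances
    · simp
  calc _ = ∑ z : Fin m → ZMod q, (∏ k, noiseW q ε (z k)) *
          ((∑ M, if hammingDist (Φ M) z ≤ τ then (1 : ℝ) else 0) /
            (Fintype.card (Tensor q n d) : ℝ) ^ m) := by
        simp only [Finset.sum_div, Finset.mul_sum, mul_div_assoc, hdist]
        exact Finset.sum_comm
    _ ≤ ∑ z : Fin m → ZMod q, (∏ k, noiseW q ε (z k)) * E := by
        gcongr with z
        · exact Finset.prod_nonneg fun k _ => noiseW_nonneg hε0 hε1 _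
        · exact hball z
    _ = E := by rw [← Finset.sum_mul, sum_prod_noiseW, one_mul]

/-- **Hoeffding bound for a wrong candidate tensor.** For fixed tensors `T ≠ T*`, i.i.d.
uniform sensing tensors and `q`-ary symmetric noise `z` (with `ỹ = y_{T*} + z`), for every
integer `τ` with `0 ≤ τ ≤ m(q−1)/q`,
`Pr(d_H(y_T, ỹ) ≤ τ) ≤ exp(−2(m(q−1)/q − τ)²/m)`. -/
theorem prob_hamming_close_le (q n d m : ℕ) [Fact q.Prime]
    (hn : 1 ≤ n) (hd : 1 ≤ d) (hm : 1 ≤ m)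
    (ε : ℝ) (hε0 : 0 ≤ ε) (hε1 : ε ≤ 1)
    (T Tstar : Tensor q n d) (hT : T ≠ Tstar)
    (τ : ℕ) (hτ : (τ : ℝ) ≤ m * ((q : ℝ) - 1) / q) :
    (∑ M : Fin m → Tensor q n d, ∑ z : Fin m → ZMod q,
        (∏ k, noiseW q ε (z k)) *
          (if hammingDist (fun k => tinner (M k) T)
              (fun k => tinner (M k) Tstar + z k) ≤ τ then 1 else 0)) /
        (Fintype.card (Tensor q n d) : ℝ) ^ m
      ≤ Real.exp (-2 * (m * ((q : ℝ) - 1) / q - τ) ^ 2 / m) :=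
  prob_hamming_close_le_general q n d m ε hε0 hε1 T Tstar hT τ hτ
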